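/- Let A be an (associative, unital) algebra and τ : A × A → ℂ a bilinear map which is a cyclic 1-cocycle: bτ(a⁰,a¹,a²) := τ(a⁰a¹,a²) − τ(a⁰,a¹a²) + τ(a²a⁰,a¹) = 0 and τ(a⁰,a¹) = −τ(a¹,a⁰). Suppose δ : A → A is a derivation with τ(δ(a⁰),a¹) + τ(a⁰,δ(a¹)) = 0. Then the trilinear map gv(a⁰,a¹,a²) := τ(a⁰·δ(a¹), a²) satisfies b(gv) = 0, where b(gv)(a⁰,a¹,a²,a³) = gv(a⁰a¹,a²,a³) − gv(a⁰,a¹a²,a³) + gv(a⁰,a¹,a²a³) − gv(a³a⁰,a¹,a²). -/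

import Mathlib

/-- `b(gv)(a⁰,a¹,a²,a³) = -bτ(a⁰δ(a¹), a², a³)`: the Leibniz rule splits `δ(a¹a²)`, and its
`a⁰a¹δ(a²)` part cancels the first term of `b(gv)`. -/
theorem gv_coboundary_eq_neg_coboundary {A M : Type*} [NonUnitalRing A] [AddCommGroup M]
    (τ : A → A → M) (hadd : ∀ a b c : A, τ (a + b) c = τ a c + τ b c)
    (δ : A → A) (hder : ∀ a b : A, δ (a * b) = δ a * b + a * δ b) (a0 a1 a2 a3 : A) :
    τ ((a0 * a1) * δ a2) a3 - τ (a0 * δ (a1 * a2)) a3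
      + τ (a0 * δ a1) (a2 * a3) - τ ((a3 * a0) * δ a1) a2
      = -(τ ((a0 * δ a1) * a2) a3 - τ (a0 * δ a1) (a2 * a3) + τ (a3 * (a0 * δ a1)) a2) := by
  rw [hder, mul_add, hadd, ← mul_assoc, ← mul_assoc, mul_assoc a3]
  abel

theorem b_gv_eq_zero_general {A : Type*} [Ring A]
    (τ : A → A → ℂ)
    (hadd₁ : ∀ a b c : A, τ (a + b) c = τ a c + τ b c)
    (hb : ∀ a0 a1 a2 : A, τ (a0 * a1) a2 - τ a0 (a1 * a2) + τ (a2 * a0) a1 = 0)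
    (δ : A → A)
    (hder : ∀ a b : A, δ (a * b) = δ a * b + a * δ b)
    (a0 a1 a2 a3 : A) :
    τ ((a0 * a1) * δ a2) a3 - τ (a0 * δ (a1 * a2)) a3
      + τ (a0 * δ a1) (a2 * a3) - τ ((a3 * a0) * δ a1) a2 = 0 := by
  rw [gv_coboundary_eq_neg_coboundary τ hadd₁ δ hder, hb, neg_zero]

/-- If `τ` is a bilinear cyclic 1-cocycle on an algebra `A`, invariant under a derivation `δ`,
then `gv(a⁰,a¹,a²) := τ(a⁰·δ(a¹), a²)` is a Hochschild cocycle: `b(gv) = 0`. -/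
theorem b_gv_eq_zero {A : Type*} [Ring A]
    (τ : A → A → ℂ)
    (hadd₁ : ∀ a b c : A, τ (a + b) c = τ a c + τ b c)
    (hadd₂ : ∀ a b c : A, τ a (b + c) = τ a b + τ a c)
    (hb : ∀ a0 a1 a2 : A, τ (a0 * a1) a2 - τ a0 (a1 * a2) + τ (a2 * a0) a1 = 0)
    (hcyc : ∀ a b : A, τ a b = - τ b a)
    (δ : A → A)
    (hδadd : ∀ a b : A, δ (a + b) = δ a + δ b)
    (hder : ∀ a b : A, δ (a * b) = δ a * b + a * δ b)
    (hinv : ∀ a b : A, τ (δ a) b + τ a (δ b) = 0)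
    (a0 a1 a2 a3 : A) :
    τ ((a0 * a1) * δ a2) a3 - τ (a0 * δ (a1 * a2)) a3
      + τ (a0 * δ a1) (a2 * a3) - τ ((a3 * a0) * δ a1) a2 = 0 :=
  b_gv_eq_zero_general τ hadd₁ hb δ hder a0 a1 a2 a3
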